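/- For every good encoding ⟦·⟧ from π_mix into π_a and R ≔ (ā + b + b.✓) | (b̄ + a + a.✓): there exist T₁, T₂ ∈ π_a with ⟦R⟧ ⟹ T₁, ⟦R⟧ ⟹ T₂, T₁ ⇓, and T₂ ⇓̸. -/

import Mathlib

set_option maxHeartbeats 1000000

/-! # Common definitions: the π-calculus with mixed choice (π_mix) and the
asynchronous π-calculus (π_a), their structural congruence and reduction
semantics, symmetric networks and symmetric executions, contexts, and
Gorla's quality criteria for encodings. -/

/-- Names. -/
abbrev Name : Type := ℕ

/-- The single-name substitution `{m/n}` mapping `n` to `m` and every other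
name to itself. -/
def rename (n m : Name) : Name → Name := fun k => if k = n then m else k

/-! ## The asynchronous π-calculus π_a -/

/-- Processes of the asynchronous π-calculus π_a:
`P ::= (νn)P | P₁ | P₂ | !P | 0 | ȳ⟨z⟩ | y(x).P | [a=b]P | ✓`. -/
inductive PiA : Type
  | nil : PiA
  | res : Name → PiA → PiA
  | par : PiA → PiA → PiA
  | repl : PiA → PiA
  | out : Name → Name → PiA
  | inp : Name → Name → PiA → PiA
  | mtch : Name → Name → PiA → PiA
  | succ : PiA
  deriving DecidableEq

namespace PiA

/-- Application of a substitution to a π_a process. -/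
def subst (σ : Name → Name) : PiA → PiA
  | nil => nil
  | res n P => res (σ n) (subst σ P)
  | par P Q => par (subst σ P) (subst σ Q)
  | repl P => repl (subst σ P)
  | out y z => out (σ y) (σ z)
  | inp y x P => inp (σ y) (σ x) (subst σ P)
  | mtch a b P => mtch (σ a) (σ b) (subst σ P)
  | succ => succ

/-- All names of a π_a process. -/
def names : PiA → Finset Name
  | nil => ∅
  | res n P => insert n (names P)
  | par P Q => names P ∪ names Q
  | repl P => names P
  | out y z => {y, z}
  | inp y x P => insert y (insert x (names P))
  | mtch a b P => insert a (insert b (names P))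
  | succ => ∅

/-- Free names of a π_a process. -/
def fn : PiA → Finset Name
  | nil => ∅
  | res n P => (fn P).erase n
  | par P Q => fn P ∪ fn Q
  | repl P => fn P
  | out y z => {y, z}
  | inp y x P => insert y ((fn P).erase x)
  | mtch a b P => insert a (insert b (fn P))
  | succ => ∅

/-- Structural congruence of π_a: the least congruence containing
α-conversion and the standard structural axioms. -/
inductive Cong : PiA → PiA → Prop
  | refl (P) : Cong P P
  | symm {P Q} : Cong P Q → Cong Q P
  | trans {P Q R} : Cong P Q → Cong Q R → Cong P R
  | resC (n) {P Q} : Cong P Q → Cong (res n P) (res n Q)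
  | parC {P P' Q Q'} : Cong P P' → Cong Q Q' → Cong (par P Q) (par P' Q')
  | replC {P Q} : Cong P Q → Cong (repl P) (repl Q)
  | inpC (y x) {P Q} : Cong P Q → Cong (inp y x P) (inp y x Q)
  | mtchC (a b) {P Q} : Cong P Q → Cong (mtch a b P) (mtch a b Q)
  | alphaRes {n m : Name} {P} : m ∉ names P →
      Cong (res n P) (res m (subst (rename n m) P))
  | alphaInp {y x x' : Name} {P} : x' ∉ names P →
      Cong (inp y x P) (inp y x' (subst (rename x x') P))
  | parNil (P) : Cong (par P nil) P
  | parComm (P Q) : Cong (par P Q) (par Q P)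
  | parAssoc (P Q R) : Cong (par P (par Q R)) (par (par P Q) R)
  | mtchId (a : Name) (P) : Cong (mtch a a P) P
  | replUnfold (P) : Cong (repl P) (par P (repl P))
  | resNil (n : Name) : Cong (res n nil) nil
  | resSwap (n m : Name) (P) : Cong (res n (res m P)) (res m (res n P))
  | resPar {n : Name} {P} (Q) : n ∉ fn P →
      Cong (par P (res n Q)) (res n (par P Q))

/-- The reduction relation ⟼ of π_a. -/
inductive Step : PiA → PiA → Prop
  | com (y x z : Name) (P) :
      Step (par (inp y x P) (out y z)) (subst (rename x z) P)
  | parS {P P'} (Q) : Step P P' → Step (par P Q) (par P' Q)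
  | resS (n : Name) {P P'} : Step P P' → Step (res n P) (res n P')
  | congS {P P' Q Q'} : Cong P P' → Step P' Q' → Cong Q' Q → Step P Q

/-- The reflexive-transitive closure ⟹ of reduction in π_a. -/
abbrev Steps : PiA → PiA → Prop := Relation.ReflTransGen Step

/-- `P` contains a top-level unguarded occurrence of ✓, i.e. `P ≡ P'' | ✓`. -/
def HasTopSuccess (P : PiA) : Prop := ∃ P'', Cong P (par P'' succ)

/-- `P` may lead to success: `P⇓`. -/
def May (P : PiA) : Prop := ∃ P', Steps P P' ∧ HasTopSuccess P'

/-- `P ⟼^ω`: `P` has an infinite sequence of reduction steps. -/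
def Diverges (P : PiA) : Prop :=
  ∃ seq : ℕ → PiA, seq 0 = P ∧ ∀ i, Step (seq i) (seq (i + 1))

end PiA

/-! ## Networks and symmetric executions in π_a -/

/-- The parallel composition `P₁ | … | Pₙ` of a list of processes. -/
def parList : List PiA → PiA
  | [] => PiA.nil
  | [P] => P
  | P :: Q :: rest => PiA.par P (parList (Q :: rest))

/-- The restriction `(νx̃)P` of a process by a sequence of names. -/
def resList : List Name → PiA → PiA
  | [], P => P
  | n :: ns, P => PiA.res n (resList ns P)

/-- `P` is a symmetric network of degree `n`: `P = (νx̃)(P₁ | … | Pₙ)` where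
`Pᵢ = σ^(i-1)(P₁)` for a symmetry relation `σ` with `σⁿ = id`. -/
def SymNetwork (n : ℕ) (P : PiA) : Prop :=
  ∃ (xs : List Name) (Ps : List PiA) (σ : Name → Name),
    Ps.length = n ∧ σ^[n] = id ∧
    (∀ i < n, Ps.getD i PiA.nil = PiA.subst (σ^[i]) (Ps.getD 0 PiA.nil)) ∧
    P = resList xs (parList Ps)

/-- `seq` (of length `len`, `none` meaning infinite) is a symmetric execution
of degree `n`: it starts at a symmetric network of degree `n`, returns to a
symmetric network of degree `n` after every `n`-th step, and is either
infinite or terminates in a symmetric network of degree `n`. -/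
def IsSymExecution (n : ℕ) (seq : ℕ → PiA) (len : Option ℕ) : Prop :=
  SymNetwork n (seq 0) ∧
  match len with
  | none =>
      (∀ i, PiA.Step (seq i) (seq (i + 1))) ∧
      (∀ k, SymNetwork n (seq (n * k)))
  | some m =>
      (∀ i < m, PiA.Step (seq i) (seq (i + 1))) ∧
      (∀ T, ¬ PiA.Step (seq m) T) ∧
      (∀ k, n * k ≤ m → SymNetwork n (seq (n * k))) ∧
      SymNetwork n (seq m)

/-! ## The π-calculus with mixed choice π_mix -/

/-- Prefixes (guards) `μ ::= y(x) | ȳ⟨z⟩`. -/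
inductive Guard : Type
  | inp : Name → Name → Guard
  | out : Name → Name → Guard
  deriving DecidableEq

/-- Application of a substitution to a guard. -/
def Guard.subst (σ : Name → Name) : Guard → Guard
  | .inp y x => .inp (σ y) (σ x)
  | .out y z => .out (σ y) (σ z)

/-- Processes of π_mix:
`P ::= (νn)P | P₁ | P₂ | !P | Σ_{i∈I} μᵢ.Pᵢ | ✓`; `0` is the empty sum. -/
inductive PiM : Type
  | res : Name → PiM → PiM
  | par : PiM → PiM → PiM
  | repl : PiM → PiM
  | sum : List (Guard × PiM) → PiM
  | succ : PiM

/-- The empty sum `0` of π_mix. -/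
def zeroM : PiM := .sum []

mutual
  /-- Application of a substitution to a π_mix process. -/
  def substM (σ : Name → Name) : PiM → PiM
    | .res n P => .res (σ n) (substM σ P)
    | .par P Q => .par (substM σ P) (substM σ Q)
    | .repl P => .repl (substM σ P)
    | .sum gs => .sum (substSummands σ gs)
    | .succ => .succ
  /-- Application of a substitution to a list of summands. -/
  def substSummands (σ : Name → Name) :
      List (Guard × PiM) → List (Guard × PiM)
    | [] => []
    | (g, P) :: rest => (g.subst σ, substM σ P) :: substSummands σ rest
end

mutual
  /-- All names of a π_mix process. -/
  def namesM : PiM → Finset Name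
    | .res n P => insert n (namesM P)
    | .par P Q => namesM P ∪ namesM Q
    | .repl P => namesM P
    | .sum gs => namesSummands gs
    | .succ => ∅
  /-- All names of a list of summands. -/
  def namesSummands : List (Guard × PiM) → Finset Name
    | [] => ∅
    | (.inp y x, P) :: rest =>
        insert y (insert x (namesM P)) ∪ namesSummands rest
    | (.out y z, P) :: rest =>
        insert y (insert z (namesM P)) ∪ namesSummands rest
end

mutual
  /-- Free names of a π_mix process. -/
  def fnM : PiM → Finset Name
    | .res n P => (fnM P).erase n
    | .par P Q => fnM P ∪ fnM Q
    | .repl P => fnM P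
    | .sum gs => fnSummands gs
    | .succ => ∅
  /-- Free names of a list of summands. -/
  def fnSummands : List (Guard × PiM) → Finset Name
    | [] => ∅
    | (.inp y x, P) :: rest => insert y ((fnM P).erase x) ∪ fnSummands rest
    | (.out y z, P) :: rest => insert y (insert z (fnM P)) ∪ fnSummands rest
end

/-- Structural congruence of π_mix. -/
inductive CongM : PiM → PiM → Prop
  | refl (P) : CongM P P
  | symm {P Q} : CongM P Q → CongM Q P
  | trans {P Q R} : CongM P Q → CongM Q R → CongM P R
  | resC (n : Name) {P Q} : CongM P Q → CongM (.res n P) (.res n Q)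
  | parC {P P' Q Q'} : CongM P P' → CongM Q Q' → CongM (.par P Q) (.par P' Q')
  | replC {P Q} : CongM P Q → CongM (.repl P) (.repl Q)
  | alphaRes {n m : Name} {P} : m ∉ namesM P →
      CongM (.res n P) (.res m (substM (rename n m) P))
  | alphaInp {gs₁ gs₂ : List (Guard × PiM)} {y x x' : Name} {P} :
      x' ∉ namesM P →
      CongM (.sum (gs₁ ++ (Guard.inp y x, P) :: gs₂))
            (.sum (gs₁ ++ (Guard.inp y x', substM (rename x x') P) :: gs₂))
  | sumPerm {gs gs' : List (Guard × PiM)} : gs.Perm gs' →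
      CongM (.sum gs) (.sum gs')
  | parNil (P) : CongM (.par P zeroM) P
  | parComm (P Q) : CongM (.par P Q) (.par Q P)
  | parAssoc (P Q R) : CongM (.par P (.par Q R)) (.par (.par P Q) R)
  | replUnfold (P) : CongM (.repl P) (.par P (.repl P))
  | resNil (n : Name) : CongM (.res n zeroM) zeroM
  | resSwap (n m : Name) (P) : CongM (.res n (.res m P)) (.res m (.res n P))
  | resPar {n : Name} {P} (Q) : n ∉ fnM P →
      CongM (.par P (.res n Q)) (.res n (.par P Q))

/-- The reduction relation ⟼ of π_mix:
`(…+ y(x).P +…) | (…+ ȳ⟨z⟩.Q +…) ⟼ P{z/x} | Q`, closed under parallel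
composition, restriction and structural congruence. -/
inductive StepM : PiM → PiM → Prop
  | com {gs₁ gs₂ : List (Guard × PiM)} {y x z : Name} {P Q : PiM} :
      (Guard.inp y x, P) ∈ gs₁ → (Guard.out y z, Q) ∈ gs₂ →
      StepM (.par (.sum gs₁) (.sum gs₂)) (.par (substM (rename x z) P) Q)
  | parS {P P'} (Q) : StepM P P' → StepM (.par P Q) (.par P' Q)
  | resS (n : Name) {P P'} : StepM P P' → StepM (.res n P) (.res n P')
  | congS {P P' Q Q'} : CongM P P' → StepM P' Q' → CongM Q' Q → StepM P Q

/-- The reflexive-transitive closure ⟹ of reduction in π_mix. -/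
abbrev StepsM : PiM → PiM → Prop := Relation.ReflTransGen StepM

/-- `S` contains a top-level unguarded occurrence of ✓, i.e. `S ≡ S'' | ✓`. -/
def HasTopSuccessM (S : PiM) : Prop := ∃ S'', CongM S (.par S'' .succ)

/-- `S` may lead to success: `S⇓`. -/
def MayM (S : PiM) : Prop := ∃ S', StepsM S S' ∧ HasTopSuccessM S'

/-- `S ⟼^ω`: `S` has an infinite sequence of reduction steps. -/
def DivergesM (S : PiM) : Prop :=
  ∃ seq : ℕ → PiM, seq 0 = S ∧ ∀ i, StepM (seq i) (seq (i + 1))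

/-- `seq` (of length `len`, `none` meaning infinite) is a maximal execution:
it is either infinite or terminates in a process with no reduction step. -/
def IsMaxExecutionM (seq : ℕ → PiM) (len : Option ℕ) : Prop :=
  match len with
  | none => ∀ i, StepM (seq i) (seq (i + 1))
  | some m => (∀ i < m, StepM (seq i) (seq (i + 1))) ∧ ∀ T, ¬ StepM (seq m) T

/-! ## α-equivalence on π_a -/

/-- α-conversion ≡α on π_a: the least congruence allowing renaming of
bound names (avoiding name clashes). -/
inductive AlphaA : PiA → PiA → Prop
  | refl (P) : AlphaA P P
  | symm {P Q} : AlphaA P Q → AlphaA Q P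
  | trans {P Q R} : AlphaA P Q → AlphaA Q R → AlphaA P R
  | resC (n : Name) {P Q} : AlphaA P Q → AlphaA (.res n P) (.res n Q)
  | parC {P P' Q Q'} : AlphaA P P' → AlphaA Q Q' → AlphaA (.par P Q) (.par P' Q')
  | replC {P Q} : AlphaA P Q → AlphaA (.repl P) (.repl Q)
  | inpC (y x : Name) {P Q} : AlphaA P Q → AlphaA (.inp y x P) (.inp y x Q)
  | mtchC (a b : Name) {P Q} : AlphaA P Q → AlphaA (.mtch a b P) (.mtch a b Q)
  | alphaRes {n m : Name} {P} : m ∉ PiA.names P →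
      AlphaA (.res n P) (.res m (PiA.subst (rename n m) P))
  | alphaInp {y x x' : Name} {P} : x' ∉ PiA.names P →
      AlphaA (.inp y x P) (.inp y x' (PiA.subst (rename x x') P))

/-! ## Contexts of π_a -/

/-- `k`-ary contexts of π_a: π_a-terms with holes `·ᵢ`, `i : Fin k`. -/
inductive CtxA : ℕ → Type
  | hole {k} : Fin k → CtxA k
  | nil {k} : CtxA k
  | res {k} : Name → CtxA k → CtxA k
  | par {k} : CtxA k → CtxA k → CtxA k
  | repl {k} : CtxA k → CtxA k
  | out {k} : Name → Name → CtxA k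
  | inp {k} : Name → Name → CtxA k → CtxA k
  | mtch {k} : Name → Name → CtxA k → CtxA k
  | succ {k} : CtxA k

/-- Filling the holes of a context with processes. -/
def CtxA.fill {k : ℕ} : CtxA k → (Fin k → PiA) → PiA
  | .hole i, f => f i
  | .nil, _ => .nil
  | .res n C, f => .res n (C.fill f)
  | .par C D, f => .par (C.fill f) (D.fill f)
  | .repl C, f => .repl (C.fill f)
  | .out y z, _ => .out y z
  | .inp y x C, f => .inp y x (C.fill f)
  | .mtch a b C, f => .mtch a b (C.fill f)
  | .succ, _ => .succ

/-- The number of occurrences of hole `·ᵢ` in a context. -/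
def CtxA.holeCount {k : ℕ} : CtxA k → Fin k → ℕ
  | .hole i, j => if i = j then 1 else 0
  | .nil, _ => 0
  | .res _ C, j => C.holeCount j
  | .par C D, j => C.holeCount j + D.holeCount j
  | .repl C, j => C.holeCount j
  | .out _ _, _ => 0
  | .inp _ _ C, j => C.holeCount j
  | .mtch _ _ C, j => C.holeCount j
  | .succ, _ => 0

/-! ## Operators of π_mix -/

/-- The operators of π_mix: restriction, parallel composition, replication,
a sum operator for every finite list of prefixes, and ✓. -/
inductive MixOp : Type
  | res : Name → MixOp
  | par : MixOp
  | repl : MixOp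
  | sum : List Guard → MixOp
  | succ : MixOp

/-- The arity of a π_mix operator. -/
def MixOp.arity : MixOp → ℕ
  | .res _ => 1
  | .par => 2
  | .repl => 1
  | .sum gs => gs.length
  | .succ => 0

/-- Applying a π_mix operator to arguments. -/
def MixOp.apply : (op : MixOp) → (Fin op.arity → PiM) → PiM
  | .res n, f => .res n (f ⟨0, by simp [MixOp.arity]⟩)
  | .par, f => .par (f ⟨0, by simp [MixOp.arity]⟩) (f ⟨1, by simp [MixOp.arity]⟩)
  | .repl, f => .repl (f ⟨0, by simp [MixOp.arity]⟩)
  | .sum gs, f => .sum (List.ofFn fun i : Fin gs.length => (gs.get i, f i))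
  | .succ, _ => .succ

/-! ## Quality criteria for encodings (Gorla) -/

/-- Criterion 1 (Compositionality): for every operator `op` of π_mix and
every set of names `N` there is a context `C_op^N` such that
`⟦op(S₁,…,S_k)⟧ = C_op^N(⟦S₁⟧,…,⟦S_k⟧)` whenever `fn(S₁) ∪ … ∪ fn(S_k) = N`. -/
def Compositional (enc : PiM → PiA) : Prop :=
  ∀ (op : MixOp) (N : Finset Name), ∃ C : CtxA op.arity,
    ∀ f : Fin op.arity → PiM,
      (Finset.univ.biUnion fun i => fnM (f i)) = N →
      enc (op.apply f) = C.fill (fun i => enc (f i))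

/-- A renaming policy keeps distinct names distinct:
`n ≠ m` implies `φ(n) ∩ φ(m) = ∅`. -/
def PolicyOK (φ : Name → List Name) : Prop :=
  ∀ n m : Name, n ≠ m → ∀ x ∈ φ n, x ∉ φ m

/-- Criterion 2 (Name invariance) w.r.t. a renaming policy `φ`:
`⟦σ(S)⟧ ≡α σ'(⟦S⟧)` if `σ` is injective and `⟦σ(S)⟧ ≍ σ'(⟦S⟧)` otherwise,
where `σ'` is such that `φ(σ(a)) = σ'(φ(a))` for every name `a`. -/
def NameInvariant (enc : PiM → PiA) (equiv : PiA → PiA → Prop)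
    (φ : Name → List Name) : Prop :=
  ∀ (S : PiM) (σ : Name → Name), ∃ σ' : Name → Name,
    (∀ a : Name, φ (σ a) = (φ a).map σ') ∧
    (Function.Injective σ →
      AlphaA (enc (substM σ S)) (PiA.subst σ' (enc S))) ∧
    (¬ Function.Injective σ →
      equiv (enc (substM σ S)) (PiA.subst σ' (enc S)))

/-- Operational completeness: `S ⟹ S'` implies `⟦S⟧ ⟹ ≍ ⟦S'⟧`. -/
def OperationallyComplete (enc : PiM → PiA) (equiv : PiA → PiA → Prop) : Prop :=
  ∀ S S', StepsM S S' → ∃ T, PiA.Steps (enc S) T ∧ equiv T (enc S')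

/-- Operational soundness: `⟦S⟧ ⟹ T` implies `S ⟹ S'` and `T ⟹ ≍ ⟦S'⟧`
for some `S'`. -/
def OperationallySound (enc : PiM → PiA) (equiv : PiA → PiA → Prop) : Prop :=
  ∀ S T, PiA.Steps (enc S) T →
    ∃ S' T', StepsM S S' ∧ PiA.Steps T T' ∧ equiv T' (enc S')

/-- Criterion 4 (Divergence reflection): `⟦S⟧ ⟼^ω` implies `S ⟼^ω`. -/
def DivergenceReflecting (enc : PiM → PiA) : Prop :=
  ∀ S, PiA.Diverges (enc S) → DivergesM S

/-- Criterion 5 (Success sensitiveness): `S⇓` iff `⟦S⟧⇓`. -/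
def SuccessSensitive (enc : PiM → PiA) : Prop :=
  ∀ S, MayM S ↔ PiA.May (enc S)

/-- `≍` is success respecting: `P⇓` and `Q⇓̸` imply `P ≭ Q`. -/
def SuccessRespecting (equiv : PiA → PiA → Prop) : Prop :=
  ∀ T₁ T₂, PiA.May T₁ → ¬ PiA.May T₂ → ¬ equiv T₁ T₂

/-- A good encoding from π_mix into π_a w.r.t. a success-respecting
behavioural equivalence `≍` on π_a and a renaming policy `φ`: it is
compositional, name invariant, operationally corresponding, divergence
reflecting and success sensitive. -/
structure GoodEncoding (enc : PiM → PiA) (equiv : PiA → PiA → Prop)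
    (φ : Name → List Name) : Prop where
  equivEquivalence : Equivalence equiv
  successRespecting : SuccessRespecting equiv
  policyOK : PolicyOK φ
  compositional : Compositional enc
  nameInvariant : NameInvariant enc equiv φ
  complete : OperationallyComplete enc equiv
  sound : OperationallySound enc equiv
  divergenceReflecting : DivergenceReflecting enc
  successSensitive : SuccessSensitive enc

/-! ## The concrete counterexample terms (prefixes CCS-like, objects omitted) -/

/-- The sum `ā + a`. -/
def aSum (a : Name) : PiM := .sum [(Guard.out a a, zeroM), (Guard.inp a a, zeroM)]

/-- The sum `b̄ + b.✓`. -/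
def bSum (b : Name) : PiM := .sum [(Guard.out b b, zeroM), (Guard.inp b b, .succ)]

/-- `P ≔ (ā + a) | (b̄ + b.✓)`. -/
def Pterm (a b : Name) : PiM := .par (aSum a) (bSum b)

/-- `Q ≔ P | P`. -/
def Qterm (a b : Name) : PiM := .par (Pterm a b) (Pterm a b)

/-- The sum `ā + b + b.✓`. -/
def rSum1 (a b : Name) : PiM :=
  .sum [(Guard.out a a, zeroM), (Guard.inp b b, zeroM), (Guard.inp b b, .succ)]

/-- The sum `b̄ + a + a.✓`. -/
def rSum2 (a b : Name) : PiM :=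
  .sum [(Guard.out b b, zeroM), (Guard.inp a a, zeroM), (Guard.inp a a, .succ)]

/-- `R ≔ (ā + b + b.✓) | (b̄ + a + a.✓)`. -/
def Rterm (a b : Name) : PiM := .par (rSum1 a b) (rSum2 a b)

/-! `R` can commit in two ways: `b̄` against `b.✓` releases ✓, while `ā` against `a`
discards both sums and leaves the inert process `0 | 0`. Success sensitivity carries the
first run over to `⟦R⟧`. Operational completeness turns the second into `⟦R⟧ ⟹ T₂ ≍ ⟦0 | 0⟧`;
since `0 | 0` cannot succeed, neither can `⟦0 | 0⟧`, and a success-respecting `≍` then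
forbids `T₂⇓`. -/

def IsInertM : PiM → Prop
  | .res _ P => IsInertM P
  | .par P Q => IsInertM P ∧ IsInertM Q
  | .repl P => IsInertM P
  | .sum gs => gs = []
  | .succ => False

lemma substSummands_eq_nil_iff (σ : Name → Name) (gs : List (Guard × PiM)) :
    substSummands σ gs = [] ↔ gs = [] := by
  cases gs <;> simp [substSummands]

lemma isInertM_substM (σ : Name → Name) : ∀ P : PiM, IsInertM (substM σ P) ↔ IsInertM P
  | .res _ P => by simpa [substM, IsInertM] using isInertM_substM σ P
  | .par P Q => by simp [substM, IsInertM, isInertM_substM σ P, isInertM_substM σ Q]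
  | .repl P => by simpa [substM, IsInertM] using isInertM_substM σ P
  | .sum gs => by simp [substM, IsInertM, substSummands_eq_nil_iff]
  | .succ => by simp [substM, IsInertM]

lemma CongM.isInertM_iff {P Q : PiM} (h : CongM P Q) : IsInertM P ↔ IsInertM Q := by
  induction h with
  | refl => rfl
  | symm _ ih => exact ih.symm
  | trans _ _ ih₁ ih₂ => exact ih₁.trans ih₂
  | resC _ _ ih => exact ih
  | parC _ _ ih₁ ih₂ => exact and_congr ih₁ ih₂
  | replC _ ih => exact ih
  | alphaRes _ => exact (isInertM_substM _ _).symm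
  | alphaInp _ => simp [IsInertM]
  | sumPerm hp => exact ⟨by rintro rfl; exact hp.nil_eq.symm, by rintro rfl; exact hp.eq_nil⟩
  | parNil _ => simp [IsInertM, zeroM]
  | parComm _ _ => exact and_comm
  | parAssoc _ _ _ => exact and_assoc.symm
  | replUnfold _ => exact and_self_iff.symm
  | resNil _ => simp [IsInertM, zeroM]
  | resSwap _ _ _ => rfl
  | resPar _ _ => rfl

lemma IsInertM.not_stepM {P Q : PiM} (hP : IsInertM P) : ¬ StepM P Q := by
  intro h
  induction h with
  | com hx _ => obtain ⟨rfl, -⟩ := hP; simp at hx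
  | parS _ _ ih => exact ih hP.1
  | resS _ _ ih => exact ih hP
  | congS hcong _ _ ih => exact ih (hcong.isInertM_iff.1 hP)

lemma IsInertM.not_hasTopSuccessM {P : PiM} (hP : IsInertM P) : ¬ HasTopSuccessM P :=
  fun ⟨_, hcong⟩ => (hcong.isInertM_iff.1 hP).2

lemma IsInertM.not_mayM {P : PiM} (hP : IsInertM P) : ¬ MayM P := by
  rintro ⟨P', hsteps, hsucc⟩
  obtain rfl | ⟨_, hstep, -⟩ := hsteps.cases_head
  · exact hP.not_hasTopSuccessM hsucc
  · exact hP.not_stepM hstep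

lemma PiA.HasTopSuccess.may {P : PiA} (h : PiA.HasTopSuccess P) : PiA.May P :=
  ⟨P, .refl, h⟩

lemma exists_steps_not_may_of_stepsM {enc : PiM → PiA} {equiv : PiA → PiA → Prop}
    (hcomplete : OperationallyComplete enc equiv) (hrespect : SuccessRespecting equiv)
    (hsensitive : SuccessSensitive enc) {S S' : PiM} (hS : StepsM S S') (hS' : ¬ MayM S') :
    ∃ T, PiA.Steps (enc S) T ∧ ¬ PiA.May T := by
  obtain ⟨T, hsteps, hT⟩ := hcomplete S S' hS
  exact ⟨T, hsteps, fun hmay => hrespect T _ hmay (mt (hsensitive S').2 hS') hT⟩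

lemma Rterm_stepM_succ (a b : Name) : StepM (Rterm a b) (.par .succ zeroM) :=
  StepM.com (y := b) (x := b) (z := b) (P := .succ) (by simp) (by simp)

lemma Rterm_stepM_zero (a b : Name) : StepM (Rterm a b) (.par zeroM zeroM) := by
  refine .congS (.parComm _ _) ?_ (.refl _)
  exact StepM.com (y := a) (x := a) (z := a) (P := zeroM) (by simp) (by simp)

lemma mayM_Rterm (a b : Name) : MayM (Rterm a b) :=
  ⟨_, .single (Rterm_stepM_succ a b), zeroM, .parComm _ _⟩

theorem good_encoding_R_reaches_success_and_failure
    (a b : Name) (hab : a ≠ b)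
    (enc : PiM → PiA) (equiv : PiA → PiA → Prop) (φ : Name → List Name)
    (hgood : GoodEncoding enc equiv φ) :
    ∃ T₁ T₂ : PiA, PiA.Steps (enc (Rterm a b)) T₁ ∧
      PiA.Steps (enc (Rterm a b)) T₂ ∧ PiA.May T₁ ∧ ¬ PiA.May T₂ := by
  obtain ⟨T₁, hsteps₁, hsucc₁⟩ := (hgood.successSensitive _).1 (mayM_Rterm a b)
  obtain ⟨T₂, hsteps₂, hfail₂⟩ :=
    exists_steps_not_may_of_stepsM hgood.complete hgood.successRespecting
      hgood.successSensitive (.single (Rterm_stepM_zero a b))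
      (IsInertM.not_mayM (P := .par zeroM zeroM) ⟨rfl, rfl⟩)
  exact ⟨T₁, T₂, hsteps₁, hsteps₂, hsucc₁.may, hfail₂⟩
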